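/- arXiv:2406.00890 — 2 statements merged into one kernel-verified Lean document; each statement's English description precedes it below -/
import Mathlib

section
/- Let E be a normed additive commutative group and let u : ℂ → E be Borel measurable. Then, as an identity of extended nonnegative reals, ∫⁻_{(s,t) ∈ [0,∞) × [0,1)} (‖u (exp(-2π(s + i t)))‖₊)² d(s,t) = (4π²)⁻¹ · ∫⁻_{z ∈ {z : 0 < ‖z‖ ∧ ‖z‖ ≤ 1}} ‖z‖⁻² · (‖u z‖₊)² dA(z), where dA is Lebesgue measure on ℂ ≅ ℝ² and the left-hand integral is with respect to Lebesgue measure on ℝ². -/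
/-! The map `z ↦ e^{-2πz}` sends the strip `[0,∞) × [0,1)` bijectively onto the punctured unit
disk, and as a holomorphic map its real Jacobian is `|d/dz e^{-2πz}|² = 4π² |e^{-2πz}|²`. The
weight `|w|⁻²` on the disk therefore cancels the factor `|e^{-2πz}|²` in the change of variables,
leaving the constant `4π²`. -/

open MeasureTheory Set Complex ENNReal Real

theorem ContinuousLinearMap.det_restrictScalars_toSpanSingleton (c : ℂ) :
    ((toSpanSingleton ℂ c).restrictScalars ℝ).det = normSq c := by
  have h : (((toSpanSingleton ℂ c).restrictScalars ℝ : ℂ →L[ℝ] ℂ) : ℂ →ₗ[ℝ] ℂ) =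
      Algebra.lmul ℝ ℂ c := by
    ext z
    simp [mul_comm]
  rw [ContinuousLinearMap.det, h, ← Algebra.norm_apply, Algebra.norm_complex_apply]

theorem lintegral_image_eq_lintegral_normSq_deriv_mul {s : Set ℂ} {f f' : ℂ → ℂ}
    (hs : MeasurableSet s) (hf' : ∀ z ∈ s, HasDerivWithinAt f (f' z) s z) (hf : InjOn f s)
    (g : ℂ → ℝ≥0∞) :
    ∫⁻ z in f '' s, g z = ∫⁻ z in s, ENNReal.ofReal (normSq (f' z)) * g (f z) := by
  rw [lintegral_image_eq_lintegral_abs_det_fderiv_mul volume hs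
    (fun z hz => (hf' z hz).hasFDerivWithinAt.restrictScalars ℝ) hf]
  simp only [ContinuousLinearMap.det_restrictScalars_toSpanSingleton,
    abs_of_nonneg (normSq_nonneg _)]

theorem setLIntegral_prod_eq_setLIntegral_reProdIm (s t : Set ℝ) (f : ℂ → ℝ≥0∞) :
    ∫⁻ p in s ×ˢ t, f (p.1 + p.2 * I) = ∫⁻ z in s ×ℂ t, f z := by
  rw [← volume_preserving_equiv_real_prod.setLIntegral_comp_preimage_emb
    measurableEquivRealProd.measurableEmbedding]
  simp only [measurableEquivRealProd_apply, re_add_im]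
  rfl

theorem norm_cexp_neg_two_pi_mul (z : ℂ) :
    ‖cexp (-(2 * π) * z)‖ = rexp (-(2 * π) * z.re) := by
  simp [norm_exp]

theorem injOn_cexp_neg_two_pi_mul :
    InjOn (fun z : ℂ => cexp (-(2 * π) * z)) (im ⁻¹' Ico 0 1) := by
  intro z hz w hw hzw
  obtain ⟨n, hn⟩ := exp_eq_exp_iff_exists_int.1 hzw
  have hsub : z = w - n * I := by
    have hπ : (π : ℂ) ≠ 0 := ofReal_ne_zero.2 pi_ne_zero
    apply mul_left_cancel₀ (neg_ne_zero.2 (mul_ne_zero two_ne_zero hπ))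
    rw [hn]
    ring
  have him : z.im = w.im - n := by simp [hsub]
  have hn0 : n = 0 := by
    simp only [mem_preimage, mem_Ico] at hz hw
    have hlow : (-1 : ℤ) < n := by exact_mod_cast (by linarith : (-1 : ℝ) < n)
    have hupp : n < 1 := by exact_mod_cast (by linarith : (n : ℝ) < 1)
    omega
  simp [hsub, hn0]

theorem exists_cexp_neg_two_pi_mul_eq {w : ℂ} (hw : w ≠ 0) :
    ∃ z : ℂ, z.re = -Real.log ‖w‖ / (2 * π) ∧ z.im ∈ Ico 0 1 ∧ cexp (-(2 * π) * z) = w := by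
  set x := -arg w / (2 * π)
  refine ⟨⟨-Real.log ‖w‖ / (2 * π), Int.fract x⟩, rfl, ⟨Int.fract_nonneg x, Int.fract_lt_one x⟩, ?_⟩
  have hlog : -(2 * π) * (⟨-Real.log ‖w‖ / (2 * π), Int.fract x⟩ : ℂ) =
      Complex.log w + ⌊x⌋ * (2 * π * I) := by
    have hπ : (π : ℂ) ≠ 0 := ofReal_ne_zero.2 pi_ne_zero
    rw [mk_eq_add_mul_I, Int.fract, Complex.log]
    simp only [x]
    push_cast
    field_simp
    ring
  rw [hlog, Complex.exp_add, exp_log hw, exp_int_mul_two_pi_mul_I, mul_one]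

theorem cexp_neg_two_pi_mul_image_reProdIm :
    (fun z : ℂ => cexp (-(2 * π) * z)) '' (Ici 0 ×ℂ Ico 0 1) = {w : ℂ | 0 < ‖w‖ ∧ ‖w‖ ≤ 1} := by
  ext w
  constructor
  · rintro ⟨z, ⟨hre : 0 ≤ z.re, -⟩, rfl⟩
    rw [mem_ofPred_eq, norm_cexp_neg_two_pi_mul]
    refine ⟨Real.exp_pos _, Real.exp_le_one_iff.2 ?_⟩
    nlinarith [pi_pos]
  · rintro ⟨hw0, hw1⟩
    obtain ⟨z, hre, him, rfl⟩ := exists_cexp_neg_two_pi_mul_eq (norm_pos_iff.1 hw0)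
    refine ⟨z, ⟨?_, him⟩, rfl⟩
    change 0 ≤ z.re
    rw [hre]
    exact div_nonneg (neg_nonneg.2 (Real.log_nonpos hw0.le hw1)) (by positivity)

theorem ofReal_normSq_mul_mul_inv_nnnorm_sq {w : ℂ} (hw : w ≠ 0) (c : ℂ) (x : ℝ≥0∞) :
    ENNReal.ofReal (normSq (w * c)) * (((‖w‖₊ : ℝ≥0∞) ^ 2)⁻¹ * x) =
      ENNReal.ofReal (normSq c) * x := by
  have hw' : ((‖w‖₊ : ℝ≥0∞) ^ 2) ≠ 0 := by simpa using hw
  rw [normSq_mul, normSq_eq_norm_sq, ENNReal.ofReal_mul (by positivity),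
    ENNReal.ofReal_pow (norm_nonneg _), ofReal_norm, enorm_eq_nnnorm, mul_comm (_ ^ 2), mul_assoc,
    ← mul_assoc (_ ^ 2), ENNReal.mul_inv_cancel hw' (by finiteness), one_mul]

theorem lintegral_sq_cylinder_eq_disk_weighted_general {E : Type*} [NormedAddCommGroup E]
    (u : ℂ → E) :
    (∫⁻ p in Set.Ici (0 : ℝ) ×ˢ Set.Ico (0 : ℝ) 1,
        (‖u (Complex.exp (-(2 * Real.pi) * ((p.1 : ℂ) + (p.2 : ℂ) * Complex.I)))‖₊ : ℝ≥0∞) ^ 2) =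
      (ENNReal.ofReal (4 * Real.pi ^ 2))⁻¹ *
        ∫⁻ z in {z : ℂ | 0 < ‖z‖ ∧ ‖z‖ ≤ 1},
          ((‖z‖₊ : ℝ≥0∞) ^ 2)⁻¹ * (‖u z‖₊ : ℝ≥0∞) ^ 2 := by
  have hS : MeasurableSet (Ici (0 : ℝ) ×ℂ Ico 0 1) :=
    (measurable_re measurableSet_Ici).inter (measurable_im measurableSet_Ico)
  have hderiv (z : ℂ) : HasDerivAt (fun z : ℂ => cexp (-(2 * π) * z))
      (cexp (-(2 * π) * z) * (-(2 * π))) z :=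
    ((hasDerivAt_id z).const_mul _).cexp.congr_deriv (by simp)
  have hnormSq : ENNReal.ofReal (normSq (-(2 * π))) = ENNReal.ofReal (4 * π ^ 2) := by
    congr 1
    rw [normSq_neg, ← Complex.ofReal_ofNat, ← Complex.ofReal_mul, normSq_ofReal]
    ring
  have hdisk : ∫⁻ z in {z : ℂ | 0 < ‖z‖ ∧ ‖z‖ ≤ 1}, ((‖z‖₊ : ℝ≥0∞) ^ 2)⁻¹ * (‖u z‖₊ : ℝ≥0∞) ^ 2 =
      ENNReal.ofReal (4 * π ^ 2) *
        ∫⁻ z in Ici 0 ×ℂ Ico 0 1, (‖u (cexp (-(2 * π) * z))‖₊ : ℝ≥0∞) ^ 2 := by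
    rw [← cexp_neg_two_pi_mul_image_reProdIm,
      lintegral_image_eq_lintegral_normSq_deriv_mul hS (fun z _ => (hderiv z).hasDerivWithinAt)
        (injOn_cexp_neg_two_pi_mul.mono fun z hz => hz.2)]
    simp_rw [ofReal_normSq_mul_mul_inv_nnnorm_sq (exp_ne_zero _)]
    rw [lintegral_const_mul' _ _ ofReal_ne_top, hnormSq]
  rw [setLIntegral_prod_eq_setLIntegral_reProdIm _ _
      fun z => (‖u (cexp (-(2 * π) * z))‖₊ : ℝ≥0∞) ^ 2, hdisk, ← mul_assoc,
    ENNReal.inv_mul_cancel (by positivity) ofReal_ne_top, one_mul]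

/-- Change of variables to holomorphic polar coordinates `(s,t) ↦ e^{-2π(s+it)}`:
`∫_{[0,∞)×[0,1)} |u∞(s,t)|² dsdt = (4π²)⁻¹ ∫_D |z|⁻² |u₀|² dxdy`. -/
theorem lintegral_sq_cylinder_eq_disk_weighted {E : Type*} [NormedAddCommGroup E]
    [MeasurableSpace E] [BorelSpace E]
    (u : ℂ → E) (hu : Measurable u) :
    (∫⁻ p in Set.Ici (0 : ℝ) ×ˢ Set.Ico (0 : ℝ) 1,
        (‖u (Complex.exp (-(2 * Real.pi) * ((p.1 : ℂ) + (p.2 : ℂ) * Complex.I)))‖₊ : ℝ≥0∞) ^ 2) =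
      (ENNReal.ofReal (4 * Real.pi ^ 2))⁻¹ *
        ∫⁻ z in {z : ℂ | 0 < ‖z‖ ∧ ‖z‖ ≤ 1},
          ((‖z‖₊ : ℝ≥0∞) ^ 2)⁻¹ * (‖u z‖₊ : ℝ≥0∞) ^ 2 :=
  lintegral_sq_cylinder_eq_disk_weighted_general u
end

section
/- Let E be a normed additive commutative group, u : ℂ → E Borel measurable, and δ > 0. If ∫⁻_{(s,t) ∈ [0,∞) × [0,1)} (‖u (exp(-2π(s + i t)))‖₊)² · e^{2δ s} d(s,t) < ∞, then ∫⁻_{z ∈ {z : 0 < ‖z‖ ∧ ‖z‖ ≤ 1}} (‖u z‖₊)² dA(z) < ∞, where dA is Lebesgue measure on ℂ ≅ ℝ². -/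
/-!
The substitution `z = e^{-2π w}` maps the strip `[0, ∞) × [0, 1)` bijectively onto the punctured
unit disk, and its real Jacobian is `|dz/dw|² = 4π² e^{-4π s}`. For `s ≥ 0` this is at most
`4π² e^{2δ s}`, so the `L²` integral over the disk is bounded by `4π²` times the weighted
integral over the half-cylinder.
-/

open MeasureTheory Set Complex ENNReal
open scoped Real

theorem Complex.setLIntegral_reProdIm (s t : Set ℝ) (f : ℂ → ℝ≥0∞) :
    ∫⁻ w in s ×ℂ t, f w = ∫⁻ p in s ×ˢ t, f (p.1 + p.2 * I) := by
  have hpre : measurableEquivRealProd.symm ⁻¹' (s ×ℂ t) = s ×ˢ t := by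
    ext p; simp [mem_reProdIm]
  rw [← (volume_preserving_equiv_real_prod.symm _).setLIntegral_comp_preimage_emb
      measurableEquivRealProd.symm.measurableEmbedding f, hpre]
  simp [mk_eq_add_mul_I]

theorem ContinuousLinearMap.det_complex_smul_one (a : ℂ) :
    (a • (1 : ℂ →L[ℝ] ℂ)).det = normSq a := by
  have h : ((a • (1 : ℂ →L[ℝ] ℂ) : ℂ →L[ℝ] ℂ) : ℂ →ₗ[ℝ] ℂ) =
      (a • LinearMap.id : ℂ →ₗ[ℂ] ℂ).restrictScalars ℝ := rfl
  rw [ContinuousLinearMap.det, h, LinearMap.det_restrictScalars, Algebra.norm_complex_apply]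
  simp

noncomputable def cylinderExp (w : ℂ) : ℂ := cexp (-(2 * π : ℂ) * w)

theorem norm_cylinderExp (w : ℂ) : ‖cylinderExp w‖ = Real.exp (-(2 * π) * w.re) := by
  simp [cylinderExp, Complex.norm_exp]

theorem cylinderExp_eq_cylinderExp_iff {w₁ w₂ : ℂ} :
    cylinderExp w₁ = cylinderExp w₂ ↔ ∃ n : ℤ, w₁ = w₂ - n * I := by
  have hπ : (π : ℂ) ≠ 0 := ofReal_ne_zero.2 Real.pi_ne_zero
  simp only [cylinderExp, exp_eq_exp_iff_exists_int]
  refine exists_congr fun n => ⟨fun h => ?_, fun h => by rw [h]; ring⟩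
  apply mul_left_cancel₀ (mul_ne_zero (neg_ne_zero.2 two_ne_zero) hπ)
  linear_combination h

theorem injOn_cylinderExp : InjOn cylinderExp (univ ×ℂ Ico 0 1) := by
  rintro w₁ ⟨-, h₁⟩ w₂ ⟨-, h₂⟩ h
  obtain ⟨n, rfl⟩ := cylinderExp_eq_cylinderExp_iff.1 h
  simp only [mem_preimage, mem_Ico, sub_im, intCast_im, mul_im, I_re, mul_zero, intCast_re,
    I_im, mul_one] at h₁ h₂
  have : n = 0 := by
    have : (n : ℝ) < 1 := by linarith
    have : (-1 : ℝ) < n := by linarith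
    norm_cast at *; omega
  simp [this]

theorem cylinderExp_image :
    cylinderExp '' (Ici 0 ×ℂ Ico 0 1) = {z : ℂ | 0 < ‖z‖ ∧ ‖z‖ ≤ 1} := by
  ext z
  constructor
  · rintro ⟨w, ⟨hre, -⟩, rfl⟩
    rw [mem_ofPred_eq, norm_cylinderExp, Real.exp_le_one_iff]
    have : (0 : ℝ) ≤ w.re := hre
    exact ⟨Real.exp_pos _, by nlinarith [Real.pi_pos]⟩
  · rintro ⟨hz₀, hz₁⟩
    set w₀ := -Complex.log z / (2 * π)
    have hw₀ : cylinderExp w₀ = z := by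
      rw [cylinderExp, ← exp_log (norm_pos_iff.1 hz₀)]
      congr 1
      simp only [w₀]
      field_simp
    refine ⟨w₀ - ⌊w₀.im⌋ * I, ⟨?_, ?_⟩, ?_⟩
    · have hre : w₀.re = -Real.log ‖z‖ / (2 * π) := by
        simp only [w₀, div_re, neg_re, log_re, mul_re, re_ofNat, ofReal_re, im_ofNat, ofReal_im,
          mul_zero, sub_zero, neg_mul, normSq_apply, mul_im, zero_mul, add_zero, neg_im, zero_div]
        field_simp
      simp only [mem_preimage, mem_Ici, sub_re, mul_re, intCast_re, I_re, intCast_im, I_im,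
        mul_zero, zero_mul, sub_zero, hre]
      exact div_nonneg (neg_nonneg.2 (Real.log_nonpos (norm_nonneg z) hz₁)) (by positivity)
    · simp only [mem_preimage, mem_Ico, sub_im, mul_im, intCast_re, I_im, intCast_im, I_re,
        mul_one, mul_zero, add_zero, Int.self_sub_floor]
      exact ⟨Int.fract_nonneg _, Int.fract_lt_one _⟩
    · rw [← hw₀]; exact cylinderExp_eq_cylinderExp_iff.2 ⟨_, rfl⟩

theorem hasDerivAt_cylinderExp (w : ℂ) :
    HasDerivAt cylinderExp (-(2 * π : ℂ) * cylinderExp w) w :=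
  ((hasDerivAt_id w).const_mul _).cexp.congr_deriv (by rw [cylinderExp, id, mul_one, mul_comm])

theorem det_fderiv_cylinderExp (w : ℂ) :
    ((-(2 * π : ℂ) * cylinderExp w) • (1 : ℂ →L[ℝ] ℂ)).det
      = 4 * π ^ 2 * Real.exp (-(4 * π) * w.re) := by
  rw [ContinuousLinearMap.det_complex_smul_one, normSq_eq_norm_sq, norm_mul, norm_cylinderExp,
    mul_pow, ← Real.exp_nat_mul]
  simp only [norm_neg, Complex.norm_mul, norm_ofNat, norm_real, Real.norm_eq_abs,
    abs_of_pos Real.pi_pos, Nat.cast_ofNat, neg_mul, mul_neg]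
  ring_nf

theorem lintegral_punctured_disk_eq_lintegral_cylinder (f : ℂ → ℝ≥0∞) :
    ∫⁻ z in {z : ℂ | 0 < ‖z‖ ∧ ‖z‖ ≤ 1}, f z =
      ∫⁻ p in Ici (0 : ℝ) ×ˢ Ico (0 : ℝ) 1,
        ENNReal.ofReal (4 * π ^ 2 * Real.exp (-(4 * π) * p.1)) *
          f (cylinderExp (p.1 + p.2 * I)) := by
  have hs : MeasurableSet (Ici (0 : ℝ) ×ℂ Ico 0 1) :=
    (measurableSet_Ici.preimage measurable_re).inter (measurableSet_Ico.preimage measurable_im)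
  rw [← cylinderExp_image,
    lintegral_image_eq_lintegral_abs_det_fderiv_mul volume hs
      (fun w _ => (hasDerivAt_cylinderExp w).complexToReal_fderiv.hasFDerivWithinAt)
      (injOn_cylinderExp.mono (reProdIm_subset_iff.2 (prod_mono (subset_univ _) subset_rfl))),
    setLIntegral_reProdIm]
  simp_rw [det_fderiv_cylinderExp,
    abs_of_nonneg (by positivity : (0 : ℝ) ≤ 4 * π ^ 2 * Real.exp _)]
  simp

theorem lintegral_sq_disk_lt_top_of_cylinder_weighted_general {E : Type*} [NormedAddCommGroup E]
    (u : ℂ → E) (δ : ℝ) (hδ : 0 < δ)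
    (hfin : (∫⁻ p in Set.Ici (0 : ℝ) ×ˢ Set.Ico (0 : ℝ) 1,
        (‖u (Complex.exp (-(2 * Real.pi) * ((p.1 : ℂ) + (p.2 : ℂ) * Complex.I)))‖₊ : ℝ≥0∞) ^ 2 *
          ENNReal.ofReal (Real.exp (2 * δ * p.1))) < ⊤) :
    (∫⁻ z in {z : ℂ | 0 < ‖z‖ ∧ ‖z‖ ≤ 1}, (‖u z‖₊ : ℝ≥0∞) ^ 2) < ⊤ := by
  rw [lintegral_punctured_disk_eq_lintegral_cylinder]
  have hweight : ∀ p ∈ Ici (0 : ℝ) ×ˢ Ico (0 : ℝ) 1,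
      ENNReal.ofReal (4 * π ^ 2 * Real.exp (-(4 * π) * p.1)) ≤
        ENNReal.ofReal (4 * π ^ 2) * ENNReal.ofReal (Real.exp (2 * δ * p.1)) := by
    rintro p ⟨hp, -⟩
    rw [← ENNReal.ofReal_mul (by positivity)]
    gcongr
    nlinarith [Real.pi_pos, mem_Ici.1 hp]
  calc _ ≤ ∫⁻ p : ℝ × ℝ in Ici 0 ×ˢ Ico 0 1, ENNReal.ofReal (4 * π ^ 2) *
          ((‖u (cylinderExp (p.1 + p.2 * I))‖₊ : ℝ≥0∞) ^ 2 *
            ENNReal.ofReal (Real.exp (2 * δ * p.1))) :=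
        setLIntegral_mono' (measurableSet_Ici.prod measurableSet_Ico) fun p hp => by
          rw [mul_left_comm, mul_comm (ENNReal.ofReal _) (_ ^ 2)]
          gcongr
          exact hweight p hp
    _ = ENNReal.ofReal (4 * π ^ 2) * _ := lintegral_const_mul' _ _ ofReal_ne_top
    _ < ⊤ := mul_lt_top ofReal_lt_top hfin

/-- If `u∞ ∈ L²_δ` on the half-cylinder for some `δ > 0`, then `u₀ ∈ L²` on the
punctured unit disk. -/
theorem lintegral_sq_disk_lt_top_of_cylinder_weighted {E : Type*} [NormedAddCommGroup E]
    [MeasurableSpace E] [BorelSpace E]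
    (u : ℂ → E) (hu : Measurable u) (δ : ℝ) (hδ : 0 < δ)
    (hfin : (∫⁻ p in Set.Ici (0 : ℝ) ×ˢ Set.Ico (0 : ℝ) 1,
        (‖u (Complex.exp (-(2 * Real.pi) * ((p.1 : ℂ) + (p.2 : ℂ) * Complex.I)))‖₊ : ℝ≥0∞) ^ 2 *
          ENNReal.ofReal (Real.exp (2 * δ * p.1))) < ⊤) :
    (∫⁻ z in {z : ℂ | 0 < ‖z‖ ∧ ‖z‖ ≤ 1}, (‖u z‖₊ : ℝ≥0∞) ^ 2) < ⊤ :=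
  lintegral_sq_disk_lt_top_of_cylinder_weighted_general u δ hδ hfin
end
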